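/- arXiv:math/0212311 — 9 statements merged into one kernel-verified Lean document; each statement's English description precedes it below -/
import Mathlib

section
/- Let Δ : A → A be an ℝ-linear operator on a commutative associative unital ℝ-algebra A equipped with an invariant scalar product ⟨·,·⟩, and let {·,·} be a symmetric bracket on A. Then Δ satisfies the three conditions (a) Δ(1) = 0, (b) ⟨Δa, b⟩ = ⟨a, Δb⟩ for all a,b, and (c) Δ(ab) − Δ(a)·b − a·Δ(b) = {a,b} for all a,b, if and only if ⟨Δa, b⟩ = −½⟨1, {a,b}⟩ for all a,b ∈ A. Consequently there is at most one operator Δ satisfying (a), (b), (c) (the abstract Laplace operator ½·div grad of the bracket). -/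
/-- In a commutative associative unital ℝ-algebra `A` with an invariant
scalar product `ip` and a symmetric bracket `br`, an ℝ-linear operator `Δ` satisfies
(a) `Δ 1 = 0`, (b) self-adjointness and (c) generates the bracket, if and only if
`⟨Δ a, b⟩ = -(1/2)⟨1, {a,b}⟩` for all `a b`; consequently such an operator is unique. -/
theorem uniqueness_of_generating_operator
    {A : Type*} [CommRing A] [Algebra ℝ A]
    (ip : A →ₗ[ℝ] A →ₗ[ℝ] ℝ)
    (ip_symm : ∀ a b : A, ip a b = ip b a)
    (ip_inv : ∀ a b c : A, ip (a * b) c = ip a (b * c))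
    (ip_nondeg : ∀ a : A, (∀ b : A, ip a b = 0) → a = 0)
    (br : A →ₗ[ℝ] A →ₗ[ℝ] A)
    (br_symm : ∀ a b : A, br a b = br b a)
    (br_leib : ∀ a b c : A, br a (b * c) = br a b * c + b * br a c)
    (Δ : A →ₗ[ℝ] A) :
    ((Δ 1 = 0 ∧ (∀ a b : A, ip (Δ a) b = ip a (Δ b)) ∧
        (∀ a b : A, Δ (a * b) - Δ a * b - a * Δ b = br a b))
      ↔ (∀ a b : A, ip (Δ a) b = -(1/2 : ℝ) * ip 1 (br a b))) ∧
    (∀ Δ₁ Δ₂ : A →ₗ[ℝ] A,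
      (Δ₁ 1 = 0 ∧ (∀ a b : A, ip (Δ₁ a) b = ip a (Δ₁ b)) ∧
        (∀ a b : A, Δ₁ (a * b) - Δ₁ a * b - a * Δ₁ b = br a b)) →
      (Δ₂ 1 = 0 ∧ (∀ a b : A, ip (Δ₂ a) b = ip a (Δ₂ b)) ∧
        (∀ a b : A, Δ₂ (a * b) - Δ₂ a * b - a * Δ₂ b = br a b)) →
      Δ₁ = Δ₂) := by
  -- ip 1 (x * y) = ip x y
  have ip_one_mul : ∀ x y : A, ip 1 (x * y) = ip x y := by
    intro x y
    rw [← ip_inv, one_mul]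
  have br_one : ∀ a : A, br a 1 = 0 := by
    intro a
    have h := br_leib a 1 1
    rw [mul_one, mul_one, one_mul] at h
    exact add_eq_left.mp h.symm
  have key : ∀ D : A →ₗ[ℝ] A,
      ((D 1 = 0 ∧ (∀ a b : A, ip (D a) b = ip a (D b)) ∧
        (∀ a b : A, D (a * b) - D a * b - a * D b = br a b))
      ↔ (∀ a b : A, ip (D a) b = -(1/2 : ℝ) * ip 1 (br a b))) := by
    intro D
    constructor
    · rintro ⟨h1, hsa, hbr⟩ a b
      have e1 : ip 1 (D (a * b)) = 0 := by
        rw [ip_symm, hsa (a*b) 1, ip_symm, h1, map_zero, LinearMap.zero_apply]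
      have e2 : ip 1 (D a * b) = ip (D a) b := ip_one_mul _ _
      have e3 : ip 1 (a * D b) = ip (D a) b := by
        rw [ip_one_mul, hsa]
      have e4 : ip 1 (br a b) = ip 1 (D (a * b) - D a * b - a * D b) := by
        rw [hbr]
      rw [map_sub, map_sub, e1, e2, e3] at e4
      linarith
    · intro h
      have h1 : D 1 = 0 := by
        apply ip_nondeg
        intro b
        rw [h 1 b, br_symm, br_one, map_zero, mul_zero]
      have hsa : ∀ a b : A, ip (D a) b = ip a (D b) := by
        intro a b
        rw [h a b, ip_symm a (D b), h b a, br_symm]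
      refine ⟨h1, hsa, ?_⟩
      intro a b
      have main : ∀ c : A, ip (D (a * b) - D a * b - a * D b - br a b) c = 0 := by
        intro c
        rw [map_sub, map_sub, map_sub]
        simp only [LinearMap.sub_apply]
        have t1 : ip (D (a * b)) c = -(1/2 : ℝ) * ip 1 (br (a*b) c) := h _ _
        have t1' : ip 1 (br (a*b) c) = ip (br a c) b + ip a (br b c) := by
          rw [br_symm, br_leib, map_add, ip_one_mul, ip_one_mul, br_symm c a, br_symm c b]
        have t2 : ip (D a * b) c = -(1/2 : ℝ) * (ip (br a b) c + ip b (br a c)) := by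
          rw [ip_inv, h a (b*c), br_leib, map_add, ip_one_mul, ip_one_mul]
        have t3 : ip (a * D b) c = -(1/2 : ℝ) * (ip (br a b) c + ip a (br b c)) := by
          rw [mul_comm a (D b), ip_inv, h b (a*c), br_leib, map_add, ip_one_mul,
            ip_one_mul, br_symm b a]
        have t4 : ip (br a c) b = ip b (br a c) := ip_symm _ _
        rw [t1, t1', t2, t3]
        ring_nf
        linarith
      have := ip_nondeg _ main
      have : D (a * b) - D a * b - a * D b - br a b = 0 := this
      linear_combination (norm := ring_nf) this
  refine ⟨key Δ, ?_⟩
  intro Δ₁ Δ₂ h₁ h₂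
  have k1 := (key Δ₁).mp h₁
  have k2 := (key Δ₂).mp h₂
  ext a
  have : ∀ b : A, ip (Δ₁ a - Δ₂ a) b = 0 := by
    intro b
    rw [map_sub, LinearMap.sub_apply, k1, k2, sub_self]
  have := ip_nondeg _ this
  simpa [sub_eq_zero] using this
end

section
/- Let A be a commutative associative unital ℝ-algebra with an invariant scalar product ⟨·,·⟩, and let {·,·} be a symmetric bracket on A. If Δ : A → A is an ℝ-linear operator satisfying ⟨Δa, b⟩ = −⟨1, {a,b}⟩ for all a,b ∈ A, then: (i) Δ(1) = 0; (ii) Δ is self-adjoint, i.e. ⟨Δa, b⟩ = ⟨a, Δb⟩ for all a,b; and (iii) Δ(ab) = Δ(a)·b + a·Δ(b) + 2{a,b} for all a,b ∈ A. -/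
/-- If `Δ` satisfies `⟨Δ a, b⟩ = -⟨1, {a,b}⟩` for all `a b` (i.e. `Δ` is the
Laplace operator `div grad` of the bracket), then `Δ 1 = 0`, `Δ` is self-adjoint, and
`Δ(ab) = Δ(a)·b + a·Δ(b) + 2{a,b}`. -/
theorem laplace_operator_generates_bracket
    {A : Type*} [CommRing A] [Algebra ℝ A]
    (ip : A →ₗ[ℝ] A →ₗ[ℝ] ℝ)
    (ip_symm : ∀ a b : A, ip a b = ip b a)
    (ip_inv : ∀ a b c : A, ip (a * b) c = ip a (b * c))
    (ip_nondeg : ∀ a : A, (∀ b : A, ip a b = 0) → a = 0)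
    (br : A →ₗ[ℝ] A →ₗ[ℝ] A)
    (br_symm : ∀ a b : A, br a b = br b a)
    (br_leib : ∀ a b c : A, br a (b * c) = br a b * c + b * br a c)
    (Δ : A →ₗ[ℝ] A)
    (hΔ : ∀ a b : A, ip (Δ a) b = -(ip 1 (br a b))) :
    Δ 1 = 0 ∧ (∀ a b : A, ip (Δ a) b = ip a (Δ b)) ∧
      (∀ a b : A, Δ (a * b) = Δ a * b + a * Δ b + 2 * br a b) := by
  have hbr1 : ∀ a : A, br a 1 = 0 := by
    intro a
    have h := br_leib a 1 1
    simp only [mul_one, one_mul] at h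
    exact (left_eq_add.mp h)
  have hzero : Δ 1 = 0 := by
    apply ip_nondeg
    intro b
    rw [hΔ, br_symm, hbr1, map_zero, neg_zero]
  refine ⟨hzero, fun a b => by rw [hΔ a b, br_symm a b, ← hΔ b a, ip_symm], ?_⟩
  intro a b
  have hip : ∀ x c : A, ip x c = ip 1 (x * c) := fun x c => by
    rw [← ip_inv, one_mul]
  have h : ∀ c : A, ip (Δ (a * b)) c = ip (Δ a * b + a * Δ b + 2 * br a b) c := by
    intro c
    have hb : br (a * b) c = br a (b * c) + br b (a * c) - 2 * (br a b * c) := by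
      rw [br_symm (a * b) c, br_leib, br_leib a, br_leib b, br_symm c a, br_symm c b,
        br_symm a b]
      ring
    have e2 : ip (Δ a * b) c = -(ip 1 (br a (b * c))) := by
      rw [ip_inv, hΔ]
    have e3 : ip (a * Δ b) c = -(ip 1 (br b (a * c))) := by
      rw [mul_comm a (Δ b), ip_inv, hΔ]
    have e4 : ip (2 * br a b) c = ip 1 (2 * (br a b * c)) := by
      rw [hip, mul_assoc]
    rw [hΔ, hb]
    simp only [map_add, map_sub, LinearMap.add_apply, e2, e3, e4]
    ring
  have hd := ip_nondeg (Δ (a * b) - (Δ a * b + a * Δ b + 2 * br a b)) (fun c => by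
    simp only [map_sub, LinearMap.sub_apply, h c, sub_self])
  exact sub_eq_zero.mp hd
end

section
/- Let A be a commutative associative unital ℝ-algebra and Δ : A → A an ℝ-linear operator. The bracket generated by Δ, {a,b}_Δ := Δ(ab) − Δ(a)·b − a·Δ(b) + Δ(1)·ab, is a derivation in each argument (i.e. {a, bc}_Δ = {a,b}_Δ·c + b·{a,c}_Δ for all a,b,c ∈ A) if and only if Δ has algebraic order ≤ 2. -/
/-- The operator of multiplication by `a`. -/
noncomputable def mulOp {A : Type*} [CommRing A] [Algebra ℝ A] (a : A) : A →ₗ[ℝ] A :=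
  LinearMap.mulLeft ℝ a

/-- Commutator of two ℝ-linear operators. -/
noncomputable def opComm {A : Type*} [CommRing A] [Algebra ℝ A] (P Q : A →ₗ[ℝ] A) :
    A →ₗ[ℝ] A :=
  P ∘ₗ Q - Q ∘ₗ P

/-- `opOrderLE n Δ`: the operator `Δ` has algebraic order `≤ n`, i.e. all `(n+1)`-fold
iterated commutators of `Δ` with multiplication operators vanish. -/
def opOrderLE {A : Type*} [CommRing A] [Algebra ℝ A] : ℕ → (A →ₗ[ℝ] A) → Prop
  | 0, Δ => ∀ a : A, opComm Δ (mulOp a) = 0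
  | n + 1, Δ => ∀ a : A, opOrderLE n (opComm Δ (mulOp a))

/-- The bracket generated by an operator `Δ`. -/
noncomputable def genBracket {A : Type*} [CommRing A] [Algebra ℝ A]
    (Δ : A →ₗ[ℝ] A) (a b : A) : A :=
  Δ (a * b) - Δ a * b - a * Δ b + Δ 1 * (a * b)

private lemma triple_comm_apply {A : Type*} [CommRing A] [Algebra ℝ A] (Δ : A →ₗ[ℝ] A)
    (a b c x : A) :
    (opComm (opComm (opComm Δ (mulOp a)) (mulOp b)) (mulOp c)) x =
      Δ (a * (b * (c * x))) - a * Δ (b * (c * x)) - b * Δ (a * (c * x))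
        - c * Δ (a * (b * x)) + a * b * Δ (c * x) + a * c * Δ (b * x)
        + b * c * Δ (a * x) - a * b * c * Δ x := by
  simp only [opComm, mulOp, LinearMap.sub_apply, LinearMap.comp_apply,
    LinearMap.mulLeft_apply, map_sub]
  ring_nf

private lemma defect_eq {A : Type*} [CommRing A] [Algebra ℝ A] (Δ : A →ₗ[ℝ] A)
    (a b c : A) :
    genBracket Δ a (b * c) - (genBracket Δ a b * c + b * genBracket Δ a c) =
      Δ (a * (b * c)) - a * Δ (b * c) - b * Δ (a * c) - c * Δ (a * b)
        + a * b * Δ c + a * c * Δ b + b * c * Δ a - a * b * c * Δ 1 := by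
  simp only [genBracket]
  ring_nf

/-- The bracket generated by `Δ` is a derivation in each argument if and only
if `Δ` has algebraic order `≤ 2`.  (Since the bracket is automatically symmetric in a
commutative algebra, it suffices to state the derivation property in the second argument.) -/
theorem bracket_biderivation_iff_order_le_two
    {A : Type*} [CommRing A] [Algebra ℝ A] (Δ : A →ₗ[ℝ] A) :
    (∀ a b c : A, genBracket Δ a (b * c) =
        genBracket Δ a b * c + b * genBracket Δ a c) ↔ opOrderLE 2 Δ := by
  constructor
  · intro h
    have hE : ∀ a b c : A,
        Δ (a * (b * c)) - a * Δ (b * c) - b * Δ (a * c) - c * Δ (a * b)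
          + a * b * Δ c + a * c * Δ b + b * c * Δ a - a * b * c * Δ 1 = 0 := by
      intro a b c
      rw [← defect_eq, h a b c]
      ring
    show ∀ a b c : A, opComm (opComm (opComm Δ (mulOp a)) (mulOp b)) (mulOp c) = 0
    intro a b c
    ext x
    rw [triple_comm_apply]
    have h1 := hE a b (c * x)
    have h2 := hE a b x
    simp only [LinearMap.zero_apply]
    ring_nf at h1 h2 ⊢
    linear_combination h1 - c * h2
  · intro h
    have h' : ∀ a b c : A, opComm (opComm (opComm Δ (mulOp a)) (mulOp b)) (mulOp c) = 0 := h
    intro a b c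
    have h1 := LinearMap.congr_fun (h' a b c) 1
    rw [triple_comm_apply] at h1
    simp only [mul_one, LinearMap.zero_apply] at h1
    rw [← sub_eq_zero, ← sub_sub, sub_sub (genBracket Δ a (b*c)), ← sub_eq_zero]
    have hd := defect_eq Δ a b c
    ring_nf at hd h1 ⊢
    linear_combination hd + h1
end

section
/- Let S^{ab}, γ^a, θ be smooth on ℝⁿ with S^{ab} = S^{ba}, let λ ∈ ℝ, and let Δ_w be the associated canonical pencil. Then for all smooth ψ, χ : ℝⁿ → ℝ and all w₁, w₂ ∈ ℝ one has the generating identity Δ_{w₁+w₂}(ψχ) − Δ_{w₁}(ψ)·χ − ψ·Δ_{w₂}(χ) = S^{ab}(∂_bψ)(∂_aχ) + γ^a( w₂(∂_aψ)χ + w₁ ψ(∂_aχ) ) + w₁w₂ θ ψχ, i.e. the canonical pencil generates the long bracket of densities with coefficients S^{ab}, γ^a, θ. -/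
open scoped BigOperators

/-- Partial derivative in the `a`-th coordinate direction on `ℝⁿ`. -/
noncomputable def pd {n : ℕ} (a : Fin n) (f : (Fin n → ℝ) → ℝ) : (Fin n → ℝ) → ℝ :=
  fun x => fderiv ℝ f x (Pi.single a 1)

/-- The canonical pencil `Δ_w` of second-order operators on densities, with coefficients
`S^{ab}`, `γ^a`, `θ` and weight `lam`:
`Δ_w f = ½( S^{ab}∂_b∂_a f + (∂_bS^{ba} + (2w+λ−1)γ^a)∂_a f + w(∂_aγ^a) f + w(w+λ−1)θ f )`. -/
noncomputable def pencil {n : ℕ} (S : (Fin n → ℝ) → Fin n → Fin n → ℝ)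
    (γ : (Fin n → ℝ) → Fin n → ℝ) (θ : (Fin n → ℝ) → ℝ) (lam w : ℝ)
    (f : (Fin n → ℝ) → ℝ) : (Fin n → ℝ) → ℝ :=
  fun x =>
    (1/2) * ((∑ a, ∑ b, S x a b * pd b (pd a f) x)
      + (∑ a, ((∑ b, pd b (fun y => S y b a) x) + (2*w + lam - 1) * γ x a) * pd a f x)
      + w * (∑ a, pd a (fun y => γ y a) x) * f x
      + w * (w + lam - 1) * θ x * f x)

lemma pd_contDiff {n : ℕ} {f : (Fin n → ℝ) → ℝ} (hf : ContDiff ℝ (⊤ : ℕ∞) f) (a : Fin n) :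
    ContDiff ℝ (⊤ : ℕ∞) (pd a f) :=
  (hf.fderiv_right (by simp)).clm_apply contDiff_const

lemma pd_mul {n : ℕ} {f g : (Fin n → ℝ) → ℝ} (hf : ContDiff ℝ (⊤ : ℕ∞) f) (hg : ContDiff ℝ (⊤ : ℕ∞) g) (a : Fin n) :
    pd a (fun y => f y * g y) = fun x => pd a f x * g x + f x * pd a g x := by
  funext x
  simp [pd, fderiv_fun_mul (hf.differentiable (by simp) x) (hg.differentiable (by simp) x)]
  ring

lemma pd_add {n : ℕ} {f g : (Fin n → ℝ) → ℝ} (hf : Differentiable ℝ f) (hg : Differentiable ℝ g) (a : Fin n) :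
    pd a (fun y => f y + g y) = fun x => pd a f x + pd a g x := by
  funext x
  simp [pd, fderiv_fun_add (hf x) (hg x)]

/-- the canonical pencil generates the long bracket of densities:
`Δ_{w₁+w₂}(ψχ) − Δ_{w₁}(ψ)χ − ψΔ_{w₂}(χ)
  = S^{ab}∂_bψ∂_aχ + γ^a(w₂(∂_aψ)χ + w₁ψ(∂_aχ)) + w₁w₂θψχ`. -/
theorem canonical_pencil_generates_long_bracket
    {n : ℕ} (S : (Fin n → ℝ) → Fin n → Fin n → ℝ)
    (γ : (Fin n → ℝ) → Fin n → ℝ) (θ : (Fin n → ℝ) → ℝ) (lam : ℝ)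
    (hS : ∀ a b : Fin n, ContDiff ℝ (⊤ : ℕ∞) (fun x => S x a b))
    (hSsymm : ∀ x, ∀ a b : Fin n, S x a b = S x b a)
    (hγ : ∀ a : Fin n, ContDiff ℝ (⊤ : ℕ∞) (fun x => γ x a))
    (hθ : ContDiff ℝ (⊤ : ℕ∞) θ)
    (ψ χ : (Fin n → ℝ) → ℝ) (hψ : ContDiff ℝ (⊤ : ℕ∞) ψ) (hχ : ContDiff ℝ (⊤ : ℕ∞) χ)
    (w₁ w₂ : ℝ) :
    ∀ x, pencil S γ θ lam (w₁ + w₂) (fun y => ψ y * χ y) x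
        - pencil S γ θ lam w₁ ψ x * χ x - ψ x * pencil S γ θ lam w₂ χ x
      = (∑ a, ∑ b, S x a b * pd b ψ x * pd a χ x)
        + (∑ a, γ x a * (w₂ * pd a ψ x * χ x + w₁ * ψ x * pd a χ x))
        + w₁ * w₂ * θ x * ψ x * χ x := by
  intro x
  have h1 : ∀ a : Fin n, pd a (fun y => ψ y * χ y)
      = fun y => pd a ψ y * χ y + ψ y * pd a χ y := fun a => pd_mul hψ hχ a
  have h2 : ∀ a b : Fin n, pd b (pd a (fun y => ψ y * χ y)) x
      = pd b (pd a ψ) x * χ x + pd a ψ x * pd b χ x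
        + pd b ψ x * pd a χ x + ψ x * pd b (pd a χ) x := by
    intro a b
    rw [h1 a]
    rw [pd_add (((pd_contDiff hψ a).mul hχ).differentiable (by simp))
      ((hψ.mul (pd_contDiff hχ a)).differentiable (by simp))]
    rw [pd_mul (pd_contDiff hψ a) hχ b, pd_mul hψ (pd_contDiff hχ a) b]
    ring
  -- second-order double sum for the product
  have e2 : (∑ a, ∑ b, S x a b * pd b (pd a (fun y => ψ y * χ y)) x)
      = (∑ a, ∑ b, S x a b * pd b (pd a ψ) x) * χ x
        + 2 * (∑ a, ∑ b, S x a b * pd b ψ x * pd a χ x)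
        + ψ x * (∑ a, ∑ b, S x a b * pd b (pd a χ) x) := by
    have swap : (∑ a, ∑ b, S x a b * pd a ψ x * pd b χ x)
        = ∑ a, ∑ b, S x a b * pd b ψ x * pd a χ x := by
      rw [Finset.sum_comm]
      exact Finset.sum_congr rfl fun a _ => Finset.sum_congr rfl fun b _ => by
        rw [hSsymm x b a]
    calc (∑ a, ∑ b, S x a b * pd b (pd a (fun y => ψ y * χ y)) x)
        = ∑ a, ∑ b, ((S x a b * pd b (pd a ψ) x) * χ x
            + (S x a b * pd a ψ x * pd b χ x + S x a b * pd b ψ x * pd a χ x)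
            + ψ x * (S x a b * pd b (pd a χ) x)) := by
          refine Finset.sum_congr rfl fun a _ => Finset.sum_congr rfl fun b _ => ?_
          rw [h2 a b]; ring
      _ = (∑ a, ∑ b, S x a b * pd b (pd a ψ) x) * χ x
            + ((∑ a, ∑ b, S x a b * pd a ψ x * pd b χ x)
              + (∑ a, ∑ b, S x a b * pd b ψ x * pd a χ x))
            + ψ x * (∑ a, ∑ b, S x a b * pd b (pd a χ) x) := by
          simp [Finset.sum_add_distrib, Finset.sum_mul, Finset.mul_sum]
      _ = _ := by rw [swap]; ring
  -- first-order sum for the product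
  have e1 : ∀ c : ℝ, (∑ a, ((∑ b, pd b (fun y => S y b a) x) + c * γ x a)
        * pd a (fun y => ψ y * χ y) x)
      = (∑ a, ((∑ b, pd b (fun y => S y b a) x)) * pd a ψ x) * χ x
        + ψ x * (∑ a, ((∑ b, pd b (fun y => S y b a) x)) * pd a χ x)
        + c * ((∑ a, γ x a * pd a ψ x) * χ x + ψ x * (∑ a, γ x a * pd a χ x)) := by
    intro c
    calc (∑ a, ((∑ b, pd b (fun y => S y b a) x) + c * γ x a)
          * pd a (fun y => ψ y * χ y) x)
        = ∑ a, (((∑ b, pd b (fun y => S y b a) x) * pd a ψ x) * χ x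
            + ψ x * ((∑ b, pd b (fun y => S y b a) x) * pd a χ x)
            + (c * ((γ x a * pd a ψ x) * χ x) + c * (ψ x * (γ x a * pd a χ x)))) := by
          refine Finset.sum_congr rfl fun a _ => ?_
          rw [h1 a]; ring
      _ = _ := by
          simp only [Finset.sum_add_distrib, Finset.sum_mul, ← Finset.mul_sum]; ring
  -- split a first-order sum
  have e4 : ∀ (c : ℝ) (f : (Fin n → ℝ) → ℝ),
      (∑ a, ((∑ b, pd b (fun y => S y b a) x) + c * γ x a) * pd a f x)
      = (∑ a, (∑ b, pd b (fun y => S y b a) x) * pd a f x)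
        + c * (∑ a, γ x a * pd a f x) := by
    intro c f
    rw [Finset.mul_sum, ← Finset.sum_add_distrib]
    refine Finset.sum_congr rfl fun a _ => by ring
  -- RHS gamma term
  have e3 : (∑ a, γ x a * (w₂ * pd a ψ x * χ x + w₁ * ψ x * pd a χ x))
      = w₂ * ((∑ a, γ x a * pd a ψ x) * χ x) + w₁ * (ψ x * (∑ a, γ x a * pd a χ x)) := by
    calc (∑ a, γ x a * (w₂ * pd a ψ x * χ x + w₁ * ψ x * pd a χ x))
        = ∑ a, (w₂ * ((γ x a * pd a ψ x) * χ x) + w₁ * (ψ x * (γ x a * pd a χ x))) := by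
          refine Finset.sum_congr rfl fun a _ => by ring
      _ = _ := by simp only [Finset.sum_add_distrib, ← Finset.mul_sum, Finset.sum_mul]
  simp only [pencil]
  rw [e2, e1, e3, e4 (2*w₁ + lam - 1) ψ, e4 (2*w₂ + lam - 1) χ]
  ring
end

section
/- Let S^{ab} = S^{ba} be smooth on ℝⁿ, let γ = (γ_a) and X = (X_a) be smooth covector fields, and raise indices by S: γ^a := S^{ab}γ_b, X^a := S^{ab}X_b. Set θ := γ^aγ_a, and let γ̄_a := γ_a + X_a, γ̄^a := S^{ab}γ̄_b, θ̄ := γ̄^aγ̄_a. Let Δ_w and Δ̄_w be the canonical pencils (λ = 0) built from (S, γ^a, θ) and (S, γ̄^a, θ̄) respectively. Then for every w ∈ ℝ and every smooth f : ℝⁿ → ℝ, Δ̄_w f − Δ_w f = ½(2w−1)( X^a ∂_a f + w(∂_aX^a) f ) − w(w−1)( ∂_aX^a − γ_aX^a − ½ X^aX_a ) f. (The first summand is the Lie derivative term ½(2w−1)L_X on w-densities; the second contains the Batalin–Vilkovisky expression div_γ X − ½X^aX_a.) -/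
open scoped BigOperators

/-- change of the canonical pencil under a change of connection
`γ̄_a = γ_a + X_a` (with `θ = γ^aγ_a`, `θ̄ = γ̄^aγ̄_a` and indices raised by `S`):
`Δ̄_w f − Δ_w f = ½(2w−1)(X^a∂_af + w(∂_aX^a)f) − w(w−1)(∂_aX^a − γ_aX^a − ½X^aX_a)f`. -/
theorem pencil_change_under_change_of_connection
    {n : ℕ} (S : (Fin n → ℝ) → Fin n → Fin n → ℝ)
    (γ X : (Fin n → ℝ) → Fin n → ℝ)
    (hS : ∀ a b : Fin n, ContDiff ℝ (⊤ : ℕ∞) (fun x => S x a b))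
    (hSsymm : ∀ x, ∀ a b : Fin n, S x a b = S x b a)
    (hγ : ∀ a : Fin n, ContDiff ℝ (⊤ : ℕ∞) (fun x => γ x a))
    (hX : ∀ a : Fin n, ContDiff ℝ (⊤ : ℕ∞) (fun x => X x a)) :
    ∀ (w : ℝ) (f : (Fin n → ℝ) → ℝ), ContDiff ℝ (⊤ : ℕ∞) f → ∀ x,
      pencil S
          (fun y a => ∑ b, S y a b * (γ y b + X y b))
          (fun y => ∑ a, (∑ b, S y a b * (γ y b + X y b)) * (γ y a + X y a))
          0 w f x
        - pencil S
          (fun y a => ∑ b, S y a b * γ y b)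
          (fun y => ∑ a, (∑ b, S y a b * γ y b) * γ y a)
          0 w f x
      = (1/2) * (2*w - 1) *
          ((∑ a, (∑ b, S x a b * X x b) * pd a f x)
            + w * (∑ a, pd a (fun y => ∑ b, S y a b * X y b) x) * f x)
        - w * (w - 1) *
          ((∑ a, pd a (fun y => ∑ b, S y a b * X y b) x)
            - (∑ a, γ x a * (∑ b, S x a b * X x b))
            - (1/2) * (∑ a, (∑ b, S x a b * X x b) * X x a)) * f x := by

  intro w f hf x
  have hdG : ∀ a : Fin n, Differentiable ℝ (fun y => ∑ b, S y a b * γ y b) := fun a =>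
    (ContDiff.sum fun b _ => (hS a b).mul (hγ b)).differentiable (by simp)
  have hdX : ∀ a : Fin n, Differentiable ℝ (fun y => ∑ b, S y a b * X y b) := fun a =>
    (ContDiff.sum fun b _ => (hS a b).mul (hX b)).differentiable (by simp)
  have hkey : ∀ a : Fin n, pd a (fun y => ∑ b, S y a b * (γ y b + X y b)) x
      = pd a (fun y => ∑ b, S y a b * γ y b) x + pd a (fun y => ∑ b, S y a b * X y b) x := by
    intro a
    have hfun : (fun y => ∑ b, S y a b * (γ y b + X y b))
        = fun y => (∑ b, S y a b * γ y b) + (∑ b, S y a b * X y b) := by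
      funext y
      rw [← Finset.sum_add_distrib]
      exact Finset.sum_congr rfl fun b _ => by ring
    rw [hfun, pd, pd, pd]
    simp only [fderiv_fun_add ((hdG a) x) ((hdX a) x)]
    rfl
  simp only [pencil, add_zero]
  simp only [hkey]
  have h1 : ∀ a : Fin n, (∑ b, S x a b * (γ x b + X x b))
      = (∑ b, S x a b * γ x b) + (∑ b, S x a b * X x b) := by
    intro a
    rw [← Finset.sum_add_distrib]
    exact Finset.sum_congr rfl fun b _ => by ring
  simp only [h1]
  have sym : ∑ a, (∑ b, S x a b * γ x b) * X x a = ∑ a, γ x a * (∑ b, S x a b * X x b) := by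
    simp only [Finset.sum_mul, Finset.mul_sum]
    rw [Finset.sum_comm]
    exact Finset.sum_congr rfl fun a _ => Finset.sum_congr rfl fun b _ => by
      rw [hSsymm x b a]; ring
  have e1 : ∑ a, ((∑ b, pd b (fun y => S y b a) x)
        + (2*w - 1) * ((∑ b, S x a b * γ x b) + (∑ b, S x a b * X x b))) * pd a f x
      = (∑ a, ((∑ b, pd b (fun y => S y b a) x)
          + (2*w - 1) * (∑ b, S x a b * γ x b)) * pd a f x)
        + (2*w - 1) * ∑ a, (∑ b, S x a b * X x b) * pd a f x := by
    rw [Finset.mul_sum, ← Finset.sum_add_distrib]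
    exact Finset.sum_congr rfl fun a _ => by ring
  have e2 : ∑ a, (pd a (fun y => ∑ b, S y a b * γ y b) x
        + pd a (fun y => ∑ b, S y a b * X y b) x)
      = (∑ a, pd a (fun y => ∑ b, S y a b * γ y b) x)
        + (∑ a, pd a (fun y => ∑ b, S y a b * X y b) x) :=
    Finset.sum_add_distrib
  have e3 : ∑ a, ((∑ b, S x a b * γ x b) + (∑ b, S x a b * X x b)) * (γ x a + X x a)
      = (∑ a, (∑ b, S x a b * γ x b) * γ x a)
        + 2 * (∑ a, γ x a * (∑ b, S x a b * X x b))
        + (∑ a, (∑ b, S x a b * X x b) * X x a) := by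
    have expand : ∑ a, ((∑ b, S x a b * γ x b) + (∑ b, S x a b * X x b)) * (γ x a + X x a)
        = (∑ a, (∑ b, S x a b * γ x b) * γ x a)
          + ((∑ a, γ x a * (∑ b, S x a b * X x b))
          + ((∑ a, (∑ b, S x a b * γ x b) * X x a)
          + (∑ a, (∑ b, S x a b * X x b) * X x a))) := by
      rw [← Finset.sum_add_distrib, ← Finset.sum_add_distrib, ← Finset.sum_add_distrib]
      exact Finset.sum_congr rfl fun a _ => by ring
    rw [expand, sym]; ring
  rw [e1, e2, e3]
  ring
end

section
/- Let A be a commutative associative unital ℝ-algebra with an invariant scalar product ⟨·,·⟩, let k ≥ 0, and let Δ : A → A be an ℝ-linear operator of algebraic order ≤ k possessing an adjoint Δ* (i.e. ⟨Δa, b⟩ = ⟨a, Δ*b⟩ for all a,b). Then Δ* also has algebraic order ≤ k. -/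
lemma opComm_neg_left {A : Type*} [CommRing A] [Algebra ℝ A] (P Q : A →ₗ[ℝ] A) :
    opComm (-P) Q = -(opComm P Q) := by
  ext x; simp [opComm]; abel

lemma opOrderLE_neg {A : Type*} [CommRing A] [Algebra ℝ A] :
    ∀ (k : ℕ) (Δ : A →ₗ[ℝ] A), opOrderLE k Δ → opOrderLE k (-Δ)
  | 0, Δ, h => fun a => by rw [opComm_neg_left, h a, neg_zero]
  | n + 1, Δ, h => fun a => by
      rw [opComm_neg_left]; exact opOrderLE_neg n _ (h a)

/-- If `P` has adjoint `Q`, then `opComm P (mulOp a)` has adjoint `-(opComm Q (mulOp a))`. -/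
lemma comm_adjoint {A : Type*} [CommRing A] [Algebra ℝ A]
    (ip : A →ₗ[ℝ] A →ₗ[ℝ] ℝ)
    (ip_symm : ∀ a b : A, ip a b = ip b a)
    (ip_inv : ∀ a b c : A, ip (a * b) c = ip a (b * c))
    (P Q : A →ₗ[ℝ] A) (hPQ : ∀ x y : A, ip (P x) y = ip x (Q y)) (a x y : A) :
    ip (opComm P (mulOp a) x) y = ip x ((-(opComm Q (mulOp a))) y) := by
  have hmul : ∀ b x y : A, ip (b * x) y = ip x (b * y) := by
    intro b x y
    rw [mul_comm b x, ip_inv]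
  simp only [opComm, mulOp, LinearMap.sub_apply, LinearMap.comp_apply,
    LinearMap.mulLeft_apply, LinearMap.neg_apply, map_sub, LinearMap.sub_apply, map_neg]
  rw [hmul a (P x) y, hPQ x (a * y), hPQ (a * x) y, hmul a x (Q y)]
  ring

/-- Core induction: if `Q` has order `≤ k` and `P` has adjoint `Q`, then `P` has order `≤ k`. -/
lemma adjoint_order_aux {A : Type*} [CommRing A] [Algebra ℝ A]
    (ip : A →ₗ[ℝ] A →ₗ[ℝ] ℝ)
    (ip_symm : ∀ a b : A, ip a b = ip b a)
    (ip_inv : ∀ a b c : A, ip (a * b) c = ip a (b * c))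
    (ip_nondeg : ∀ a : A, (∀ b : A, ip a b = 0) → a = 0) :
    ∀ (k : ℕ) (P Q : A →ₗ[ℝ] A), opOrderLE k Q →
      (∀ x y : A, ip (P x) y = ip x (Q y)) → opOrderLE k P
  | 0, P, Q, hQ, hPQ => by
      intro a
      ext x
      simp only [LinearMap.zero_apply]
      apply ip_nondeg
      intro y
      rw [comm_adjoint ip ip_symm ip_inv P Q hPQ a x y, hQ a]
      simp
  | n + 1, P, Q, hQ, hPQ => by
      intro a
      exact adjoint_order_aux ip ip_symm ip_inv ip_nondeg n _ (-(opComm Q (mulOp a)))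
        (opOrderLE_neg n _ (hQ a)) (comm_adjoint ip ip_symm ip_inv P Q hPQ a)

/-- in an algebra with an invariant scalar product, the adjoint of an
operator of algebraic order `≤ k` also has order `≤ k`. -/
theorem adjoint_has_same_order
    {A : Type*} [CommRing A] [Algebra ℝ A]
    (ip : A →ₗ[ℝ] A →ₗ[ℝ] ℝ)
    (ip_symm : ∀ a b : A, ip a b = ip b a)
    (ip_inv : ∀ a b c : A, ip (a * b) c = ip a (b * c))
    (ip_nondeg : ∀ a : A, (∀ b : A, ip a b = 0) → a = 0)
    (k : ℕ) (Δ Δstar : A →ₗ[ℝ] A)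
    (hord : opOrderLE k Δ)
    (hadj : ∀ a b : A, ip (Δ a) b = ip a (Δstar b)) :
    opOrderLE k Δstar := by
  refine adjoint_order_aux ip ip_symm ip_inv ip_nondeg k Δstar Δ hord ?_
  intro x y
  rw [ip_symm, ← hadj, ip_symm]
end

section
/- Let A be a commutative associative unital ℝ-algebra with an invariant scalar product ⟨·,·⟩, let k ≥ 1, and let Δ : A → A be an ℝ-linear operator of algebraic order ≤ k possessing an adjoint Δ*. Then the operator Δ − (−1)^k Δ* has algebraic order ≤ k − 1. -/
section Aux
variable {A : Type*} [CommRing A] [Algebra ℝ A]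

lemma opComm_apply (P Q : A →ₗ[ℝ] A) (x : A) :
    opComm P Q x = P (Q x) - Q (P x) := rfl

lemma mulOp_apply (a x : A) : mulOp a x = a * x := rfl

lemma opComm_add_left (P Q R : A →ₗ[ℝ] A) :
    opComm (P + Q) R = opComm P R + opComm Q R := by
  ext x; simp [opComm]; abel

lemma opComm_smul_left (c : ℝ) (P R : A →ₗ[ℝ] A) :
    opComm (c • P) R = c • opComm P R := by
  ext x; simp [opComm, smul_sub]

-- adjoint of multiplication
lemma adj_mul (ip : A →ₗ[ℝ] A →ₗ[ℝ] ℝ)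
    (ip_inv : ∀ a b c : A, ip (a * b) c = ip a (b * c))
    (a x y : A) : ip (a * x) y = ip x (a * y) := by
  rw [mul_comm a x, ip_inv]

-- adjoint of commutator
lemma adj_comm (ip : A →ₗ[ℝ] A →ₗ[ℝ] ℝ)
    (ip_inv : ∀ a b c : A, ip (a * b) c = ip a (b * c))
    (Δ Δstar : A →ₗ[ℝ] A)
    (hadj : ∀ a b : A, ip (Δ a) b = ip a (Δstar b))
    (a x y : A) :
    ip (opComm Δ (mulOp a) x) y = ip x ((-(opComm Δstar (mulOp a))) y) := by
  have h1 : ip (Δ (a*x)) y = ip x (a * Δstar y) := by rw [hadj, adj_mul ip ip_inv]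
  have h2 : ip (a * Δ x) y = ip x (Δstar (a*y)) := by rw [adj_mul ip ip_inv, hadj]
  simp only [opComm_apply, mulOp_apply, LinearMap.neg_apply, map_sub, map_neg, LinearMap.sub_apply]
  rw [h1, h2]; ring

theorem aux_lower
    (ip : A →ₗ[ℝ] A →ₗ[ℝ] ℝ)
    (ip_symm : ∀ a b : A, ip a b = ip b a)
    (ip_inv : ∀ a b c : A, ip (a * b) c = ip a (b * c))
    (ip_nondeg : ∀ a : A, (∀ b : A, ip a b = 0) → a = 0)
    (m : ℕ) :
    ∀ (Δ Δstar : A →ₗ[ℝ] A), opOrderLE (m+1) Δ →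
      (∀ a b : A, ip (Δ a) b = ip a (Δstar b)) →
      opOrderLE m (Δ + ((-1:ℝ)^m) • Δstar) := by
  induction m with
  | zero =>
    intro Δ Δstar hord hadj
    intro a
    -- E := opComm Δ (mulOp a) commutes with all mulOp b
    set E := opComm Δ (mulOp a) with hE
    have hcomm : ∀ b : A, opComm E (mulOp b) = 0 := hord a
    have hEmul : ∀ x : A, E x = x * E 1 := by
      intro x
      have := congrArg (fun P => P 1) (hcomm x)
      simp only [opComm_apply, mulOp_apply, LinearMap.zero_apply] at this
      have h2 : E (x * 1) - x * E 1 = 0 := this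
      rw [mul_one] at h2
      rw [sub_eq_zero] at h2
      rw [h2, mul_comm]
    -- E is self-adjoint
    have hself : ∀ x y : A, ip (E x) y = ip x (E y) := by
      intro x y
      rw [hEmul x, hEmul y, mul_comm x (E 1), mul_comm y (E 1), adj_mul ip ip_inv]
    -- combine with adj_comm
    have hzero : E + opComm Δstar (mulOp a) = 0 := by
      ext y
      apply ip_nondeg
      intro x
      rw [ip_symm]
      have h1 := adj_comm ip ip_inv Δ Δstar hadj a x y
      rw [hself x y] at h1
      simp only [LinearMap.add_apply, map_add, LinearMap.zero_apply]
      rw [h1]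
      simp
    have : opComm (Δ + ((-1:ℝ)^0) • Δstar) (mulOp a)
        = E + opComm Δstar (mulOp a) := by
      rw [pow_zero, one_smul, opComm_add_left]
    rw [this, hzero]
  | succ m ih =>
    intro Δ Δstar hord hadj
    intro a
    have key : opComm (Δ + ((-1:ℝ)^(m+1)) • Δstar) (mulOp a)
        = opComm Δ (mulOp a) + ((-1:ℝ)^m) • (-(opComm Δstar (mulOp a))) := by
      rw [opComm_add_left, opComm_smul_left, pow_succ]
      module
    rw [key]
    exact ih (opComm Δ (mulOp a)) (-(opComm Δstar (mulOp a))) (hord a)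
      (adj_comm ip ip_inv Δ Δstar hadj a)

end Aux

/-- in an algebra with an invariant scalar product, if `Δ` has algebraic
order `≤ k` (`k ≥ 1`) and possesses an adjoint `Δ*`, then `Δ − (−1)^k Δ*` has algebraic
order `≤ k − 1`. -/
theorem divergence_of_operator_lowers_order
    {A : Type*} [CommRing A] [Algebra ℝ A]
    (ip : A →ₗ[ℝ] A →ₗ[ℝ] ℝ)
    (ip_symm : ∀ a b : A, ip a b = ip b a)
    (ip_inv : ∀ a b c : A, ip (a * b) c = ip a (b * c))
    (ip_nondeg : ∀ a : A, (∀ b : A, ip a b = 0) → a = 0)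
    (k : ℕ) (hk : 1 ≤ k) (Δ Δstar : A →ₗ[ℝ] A)
    (hord : opOrderLE k Δ)
    (hadj : ∀ a b : A, ip (Δ a) b = ip a (Δstar b)) :
    opOrderLE (k - 1) (Δ - ((-1 : ℝ) ^ k) • Δstar) := by
  obtain ⟨m, rfl⟩ : ∃ m, k = m + 1 := ⟨k - 1, (Nat.succ_pred_eq_of_pos hk).symm⟩
  have heq : Δ - ((-1:ℝ)^(m+1)) • Δstar = Δ + ((-1:ℝ)^m) • Δstar := by
    rw [pow_succ]; module
  simp only [Nat.add_sub_cancel, heq]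
  exact aux_lower ip ip_symm ip_inv ip_nondeg m Δ Δstar hord hadj
end

section
/- Let A be a commutative associative unital ℝ-algebra with an invariant scalar product ⟨·,·⟩, and let X : A → A be a derivation possessing an adjoint X*. Then: (i) X(a) + X*(a) = X*(1)·a for every a ∈ A, so X + X* is the operator of multiplication by the element X*(1); and (ii) writing div X := −X*(1), for any c ∈ A the derivation cX : b ↦ c·X(b) has X*∘L_c as an adjoint and its divergence div(cX) := −X*(c) satisfies the Leibniz-type identity div(cX) = c·div X + X(c). -/
/-- let `X` be a derivation of `A` with adjoint `X*` w.r.t. an invariant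
scalar product. Then (i) `X(a) + X*(a) = X*(1)·a` for all `a` (so `X + X*` is the
multiplication by `X*(1) = −div X`); and (ii) for any `c ∈ A`, the derivation
`cX : b ↦ c·X(b)` has `X* ∘ L_c` as an adjoint, and its divergence `div(cX) = −X*(c)`
satisfies `div(cX) = c·div X + X(c)`. -/
theorem divergence_of_derivation
    {A : Type*} [CommRing A] [Algebra ℝ A]
    (ip : A →ₗ[ℝ] A →ₗ[ℝ] ℝ)
    (ip_symm : ∀ a b : A, ip a b = ip b a)
    (ip_inv : ∀ a b c : A, ip (a * b) c = ip a (b * c))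
    (ip_nondeg : ∀ a : A, (∀ b : A, ip a b = 0) → a = 0)
    (X Xstar : A →ₗ[ℝ] A)
    (hder : ∀ a b : A, X (a * b) = X a * b + a * X b)
    (hadj : ∀ a b : A, ip (X a) b = ip a (Xstar b)) :
    (∀ a : A, X a + Xstar a = Xstar 1 * a) ∧
    (∀ c : A,
      (∀ a b : A, ip (c * X a) b = ip a (Xstar (c * b))) ∧
      -(Xstar c) = c * -(Xstar 1) + X c) := by
  have hi : ∀ a : A, X a + Xstar a = Xstar 1 * a := by
    intro a
    have key : ∀ b : A, ip (X a + Xstar a - Xstar 1 * a) b = 0 := by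
      intro b
      have h1 : ip (Xstar a) b = ip (X b) a := by
        rw [ip_symm, ← hadj]
      have h2 : ip (Xstar 1 * a) b = ip (X a) b + ip (X b) a := by
        have : ip (Xstar 1 * a) b = ip (Xstar 1) (a * b) := ip_inv _ _ _
        rw [this, ip_symm, ← hadj, hder]
        have e1 : ip (X a * b) 1 = ip (X a) b := by rw [ip_inv, mul_one]
        have e2 : ip (a * X b) 1 = ip (X b) a := by
          rw [mul_comm, ip_inv, mul_one]
        simp only [map_add, LinearMap.add_apply, e1, e2]
      simp only [map_sub, map_add, LinearMap.sub_apply, LinearMap.add_apply, h1, h2]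
      ring
    have := ip_nondeg _ key
    linear_combination (norm := ring_nf) this
  refine ⟨hi, fun c => ⟨fun a b => ?_, ?_⟩⟩
  · rw [mul_comm, ip_inv, hadj]
  · have := hi c
    linear_combination (norm := ring_nf) -this
end

section
/- Let A be a commutative associative unital ℝ-algebra with an invariant scalar product ⟨·,·⟩, and let X, Y : A → A be derivations possessing adjoints X*, Y*. Then the commutator [X,Y] := X∘Y − Y∘X is a derivation with adjoint [Y*, X*] := Y*∘X* − X*∘Y*, and the canonical divergence has zero curvature: div([X,Y]) = X(div Y) − Y(div X), where div Z := −Z*(1) for a derivation Z with adjoint Z*. -/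
/-- for derivations `X`, `Y` with adjoints `X*`, `Y*` w.r.t. an invariant
scalar product, the commutator `[X,Y]` is a derivation with adjoint `[Y*,X*]`, and the
canonical divergence `div Z := −Z*(1)` has zero curvature:
`div [X,Y] = X(div Y) − Y(div X)`. -/
theorem canonical_divergence_has_zero_curvature
    {A : Type*} [CommRing A] [Algebra ℝ A]
    (ip : A →ₗ[ℝ] A →ₗ[ℝ] ℝ)
    (ip_symm : ∀ a b : A, ip a b = ip b a)
    (ip_inv : ∀ a b c : A, ip (a * b) c = ip a (b * c))
    (ip_nondeg : ∀ a : A, (∀ b : A, ip a b = 0) → a = 0)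
    (X Y Xstar Ystar : A →ₗ[ℝ] A)
    (hXder : ∀ a b : A, X (a * b) = X a * b + a * X b)
    (hYder : ∀ a b : A, Y (a * b) = Y a * b + a * Y b)
    (hXadj : ∀ a b : A, ip (X a) b = ip a (Xstar b))
    (hYadj : ∀ a b : A, ip (Y a) b = ip a (Ystar b)) :
    (∀ a b : A, (X (Y (a * b)) - Y (X (a * b))) =
        (X (Y a) - Y (X a)) * b + a * (X (Y b) - Y (X b))) ∧
    (∀ a b : A, ip (X (Y a) - Y (X a)) b = ip a (Ystar (Xstar b) - Xstar (Ystar b))) ∧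
    -(Ystar (Xstar 1) - Xstar (Ystar 1)) = X (-(Ystar 1)) - Y (-(Xstar 1)) := by
  -- ip (u*v) 1 = ip u v
  have hmul1 : ∀ u v : A, ip (u * v) 1 = ip u v := by
    intro u v
    rw [ip_inv, mul_one]
  -- Key formula: Zstar a = a * Zstar 1 - Z a for a derivation Z with adjoint Zstar
  have key : ∀ (Z Zs : A →ₗ[ℝ] A),
      (∀ a b : A, Z (a * b) = Z a * b + a * Z b) →
      (∀ a b : A, ip (Z a) b = ip a (Zs b)) →
      ∀ a : A, Zs a = a * Zs 1 - Z a := by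
    intro Z Zs hder hadj a
    have h0 : Zs a - (a * Zs 1 - Z a) = 0 := by
      apply ip_nondeg
      intro b
      have h1 : ip (Z b) a = ip b (a * Zs 1) - ip b (Z a) := by
        have h2 : ip (Z (b * a)) 1 = ip (Z b * a) 1 + ip (b * Z a) 1 := by
          rw [hder]
          exact LinearMap.map_add₂ ip _ _ 1
        rw [hmul1, hmul1, hadj (b * a) 1, ip_inv] at h2
        linarith
      have h3 : ip (Zs a) b = ip (a * Zs 1) b - ip (Z a) b := by
        rw [ip_symm (Zs a) b, ← hadj b a, h1, ip_symm b (a * Zs 1), ip_symm b (Z a)]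
      simp only [map_sub, LinearMap.sub_apply]
      linarith
    have := sub_eq_zero.mp h0
    linear_combination this
  refine ⟨?_, ?_, ?_⟩
  · intro a b
    rw [hYder a b, map_add, hXder (Y a) b, hXder a (Y b),
        hXder a b, map_add, hYder (X a) b, hYder a (X b)]
    ring
  · intro a b
    simp only [map_sub, LinearMap.sub_apply]
    rw [hXadj (Y a) (b), hYadj a (Xstar b), hYadj (X a) b, hXadj a (Ystar b)]
  · rw [key Y Ystar hYder hYadj (Xstar 1), key X Xstar hXder hXadj (Ystar 1),
        map_neg, map_neg]
    ring
end
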